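/- arXiv:math/9808093 — 2 statements merged into one kernel-verified Lean document; each statement's English description precedes it below -/
import Mathlib

section
/- If the computation of an infinite time Turing machine program p on an input x ∈ 2^ℕ halts, then it halts at a countable stage: the first ordinal stage at which the machine is in the halt state is less than ω₁. -/
open scoped Classical

namespace ITTM

/-- A real is an element of Cantor space. -/
abbrev R := ℕ → Bool

/-- The constant-zero real. -/
def zeroR : R := fun _ => false

/-- The real ⟨1,0,0,...⟩ coding the answer "Yes". -/
def oneR : R := fun n => decide (n = 0)

/-- The real coding a natural number `p`: `p` ones followed by zeros. -/
def natR (p : ℕ) : R := fun n => decide (n < p)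

/-- The real coding the pair of reals `(y, z)`. -/
def pairR (y z : R) : R := fun n => if n % 2 = 0 then y (n / 2) else z (n / 2)

/-- A snapshot of an infinite time Turing machine computation with state set
`Fin (Q+1)`: the current state, the head position, and the contents of the
three tapes (tape 0 is the input tape, tape 1 the scratch tape, tape 2 the
output tape); cells hold values in `Bool` (`true` = 1, `false` = 0). -/
structure Snapshot (Q : ℕ) where
  state : Fin (Q + 1)
  head : ℕ
  tape : Fin 3 → ℕ → Bool

/-- An infinite time Turing machine program: a finite set of states
`Fin (Q+1)` with distinguished start, limit and halt states, and a finite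
transition table which, given the current state and the three cell values
read by the head, specifies the next state, the three values to write, and
the direction to move (`true` = right, `false` = left). -/
structure Machine where
  Q : ℕ
  start : Fin (Q + 1)
  limit : Fin (Q + 1)
  halt : Fin (Q + 1)
  trans : Fin (Q + 1) × (Fin 3 → Bool) → Fin (Q + 1) × (Fin 3 → Bool) × Bool

instance : Inhabited Machine := ⟨⟨0, 0, 0, 0, fun _ => (0, fun _ => false, true)⟩⟩

namespace Machine

/-- The initial snapshot on input `x`: head on cell 0 in the start state, `x`
on the input tape, the other tapes filled with zeros. -/
def init (M : Machine) (x : R) : Snapshot M.Q where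
  state := M.start
  head := 0
  tape := fun i n => if i = 0 then x n else false

/-- One step of computation applied to a snapshot. -/
def stepSnap (M : Machine) (s : Snapshot M.Q) : Snapshot M.Q :=
  let t := M.trans (s.state, fun i => s.tape i s.head)
  { state := t.1
    head := if t.2.2 then s.head + 1 else s.head - 1
    tape := fun i n => if n = s.head then t.2.1 i else s.tape i n }

/-- The snapshot of the computation of machine `M` on input `x` at ordinal
stage `α`, defined by transfinite recursion: at stage 0 the initial snapshot,
at successor stages the transition table is applied, and at limit stages the
head is on cell 0 in the limit state and each cell holds the `limsup` of its
earlier values (1 iff its value was 1 cofinally often below the limit). -/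
noncomputable def snap (M : Machine) (x : R) : Ordinal.{0} → Snapshot M.Q :=
  WellFounded.fix Ordinal.lt_wf fun α ih =>
    if _h0 : α = 0 then M.init x
    else if hs : ∃ β, β < α ∧ α = β + 1 then
      M.stepSnap (ih hs.choose hs.choose_spec.1)
    else
      { state := M.limit
        head := 0
        tape := fun i n =>
          decide (∀ β < α, ∃ γ, β ≤ γ ∧ ∃ hγ : γ < α, (ih γ hγ).tape i n = true) }

/-- The machine is in the halt state at stage `α`. -/
def haltedAt (M : Machine) (x : R) (α : Ordinal) : Prop :=
  (M.snap x α).state = M.halt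

/-- The computation of `M` on input `x` halts exactly at stage `α`: stage `α`
is the first stage at which the machine is in the halt state. -/
def haltsAt (M : Machine) (x : R) (α : Ordinal) : Prop :=
  M.haltedAt x α ∧ ∀ β < α, ¬ M.haltedAt x β

/-- The computation of `M` on input `x` halts. -/
def halts (M : Machine) (x : R) : Prop := ∃ α, M.haltedAt x α

/-- The computation of `M` on input `x` halts with output `y`: at the first
stage at which the machine is in the halt state, the output tape reads `y`. -/
def outputs (M : Machine) (x y : R) : Prop :=
  ∃ α, M.haltsAt x α ∧ (M.snap x α).tape 2 = y

end Machine

/-- Machines are coded by natural numbers. -/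
noncomputable instance : Encodable Machine :=
  Encodable.ofEquiv
    (Σ Q : ℕ, (Fin (Q + 1) × Fin (Q + 1) × Fin (Q + 1)) ×
      ((Fin (Q + 1) × (Fin 3 → Bool)) → Fin (Q + 1) × (Fin 3 → Bool) × Bool))
    { toFun := fun M => ⟨M.Q, (M.start, M.limit, M.halt), M.trans⟩
      invFun := fun s => ⟨s.1, s.2.1.1, s.2.1.2.1, s.2.1.2.2, s.2.2⟩
      left_inv := fun _ => rfl
      right_inv := fun _ => rfl }

/-- The machine coded by the natural number `p`; every natural number codes a
machine, and every machine is coded by some natural number. -/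
noncomputable def prog (p : ℕ) : Machine :=
  ((Encodable.decode p : Option Machine)).getD default

/-- `φ_p(x)` halts with output `y`. -/
noncomputable def phiOutputs (p : ℕ) (x y : R) : Prop := (prog p).outputs x y

/-- A set of reals is infinite time decidable when some machine, on any input
`x`, halts with output ⟨1,0,0,...⟩ if `x ∈ A` and output ⟨0,0,0,...⟩ if
`x ∉ A`. -/
def ITTMDecidable (A : Set R) : Prop :=
  ∃ M : Machine, ∀ x : R, (x ∈ A → M.outputs x oneR) ∧ (x ∉ A → M.outputs x zeroR)

/-- A set of reals is infinite time semi-decidable when it is the halting set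
of some machine. -/
def ITTMSemiDecidable (A : Set R) : Prop :=
  ∃ M : Machine, A = {x : R | M.halts x}

/-- The binary relation on ℕ coded by the real `x`:
`n ◁ k ⟺ x(⟨n,k⟩) = 1` where `⟨·,·⟩` is the pairing function. -/
def rel (x : R) (n k : ℕ) : Prop := x (Nat.pair n k) = true

/-- The field of the relation coded by `x`. -/
def field (x : R) : Set ℕ := {n | ∃ k, rel x n k ∨ rel x k n}

/-- The relation coded by `x`, restricted to its field. -/
def relOn (x : R) : field x → field x → Prop := fun a b => rel x a.1 b.1

/-- The real `x` codes a well-order of (a subset of) ℕ, namely its field. -/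
def codesWellOrder (x : R) : Prop := IsWellOrder (field x) (relOn x)

/-- The set of reals coding well-orders. -/
def WO : Set R := {x | codesWellOrder x}

/-- The real `x` codes a well-order of order type `α`. -/
def codesOrdinal (x : R) (α : Ordinal) : Prop :=
  ∃ h : codesWellOrder x, @Ordinal.type _ (relOn x) h = α

/-- An ordinal is clockable when some machine on input 0 halts exactly at
stage `α`. -/
def Clockable (α : Ordinal) : Prop := ∃ M : Machine, M.haltsAt zeroR α

/-- A real is writable when it is the output of some machine on input 0. -/
def WritableReal (x : R) : Prop := ∃ M : Machine, M.outputs zeroR x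

/-- An ordinal is writable when some writable real codes a well-order of that
order type. -/
def WritableOrdinal (α : Ordinal) : Prop :=
  ∃ x : R, WritableReal x ∧ codesOrdinal x α

/-- A real is eventually writable when some machine on input 0 never halts,
but from some stage onward the content of its output tape is exactly `x`. -/
def EventuallyWritableReal (x : R) : Prop :=
  ∃ M : Machine, ¬ M.halts zeroR ∧ ∃ α : Ordinal, ∀ β ≥ α, (M.snap zeroR β).tape 2 = x

/-- An ordinal is eventually writable when some eventually writable real codes
a well-order of that order type. -/
def EventuallyWritableOrdinal (α : Ordinal) : Prop :=
  ∃ x : R, EventuallyWritableReal x ∧ codesOrdinal x α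

end ITTM


section HaltingAux

open ITTM Set

variable (M : ITTM.Machine) (x : ITTM.R)

private lemma snap_zero : M.snap x 0 = M.init x := by
  unfold ITTM.Machine.snap
  rw [WellFounded.fix_eq]
  exact dif_pos rfl

private lemma snap_succ (β : Ordinal) :
    M.snap x (β + 1) = M.stepSnap (M.snap x β) := by
  have h0 : (β + 1 : Ordinal) ≠ 0 := by
    rw [Ordinal.add_one_eq_succ]; exact Ordinal.succ_ne_zero β
  have hs : ∃ γ, γ < β + 1 ∧ β + 1 = γ + 1 :=
    ⟨β, by rw [Ordinal.add_one_eq_succ]; exact Order.lt_succ β, rfl⟩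
  have hc : hs.choose = β := by
    have h2 := hs.choose_spec.2
    have h3 : Order.succ β = Order.succ hs.choose := by
      rw [← Ordinal.add_one_eq_succ, ← Ordinal.add_one_eq_succ]
      exact h2
    exact (Order.succ_injective h3).symm
  conv_lhs => unfold ITTM.Machine.snap
  rw [WellFounded.fix_eq, dif_neg h0, dif_pos hs]
  show M.stepSnap (M.snap x hs.choose) = M.stepSnap (M.snap x β)
  rw [hc]

/-- The cell `(i, n)` takes value `1` cofinally often below `α`. -/
private def P (α : Ordinal.{0}) (i : Fin 3) (n : ℕ) : Prop :=
  ∀ β < α, ∃ γ, β ≤ γ ∧ ∃ _ : γ < α, (M.snap x γ).tape i n = true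

private lemma snap_limit (α : Ordinal) (h0 : α ≠ 0)
    (hs : ¬ ∃ β, β < α ∧ α = β + 1) :
    M.snap x α =
      { state := M.limit, head := 0,
        tape := fun i n => decide (P M x α i n) } := by
  conv_lhs => unfold ITTM.Machine.snap
  rw [WellFounded.fix_eq, dif_neg h0, dif_neg hs]
  rfl

private noncomputable def wit (α σ : Ordinal.{0}) (i : Fin 3) (n : ℕ) : Ordinal :=
  if h : σ < α ∧ P M x α i n then (h.2 σ h.1).choose else 0

private lemma wit_spec {α σ : Ordinal} {i : Fin 3} {n : ℕ}
    (h1 : σ < α) (h2 : P M x α i n) :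
    σ ≤ wit M x α σ i n ∧ wit M x α σ i n < α ∧
      (M.snap x (wit M x α σ i n)).tape i n = true := by
  unfold wit
  rw [dif_pos ⟨h1, h2⟩]
  obtain ⟨ha, hb, hc⟩ := (h2 σ h1).choose_spec
  exact ⟨ha, hb, hc⟩

private lemma exists_stab (α : Ordinal) (i : Fin 3) (n : ℕ) (h : ¬ P M x α i n) :
    ∃ β, β < α ∧ ∀ τ, β ≤ τ → τ < α → (M.snap x τ).tape i n = false := by
  unfold P at h
  push_neg at h
  obtain ⟨β, hβ, hall⟩ := h
  refine ⟨β, hβ, fun τ h1 h2 => ?_⟩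
  have := hall τ h1 h2
  simpa using this

private noncomputable def stab (α : Ordinal.{0}) (i : Fin 3) (n : ℕ) : Ordinal :=
  if h : ¬ P M x α i n then (exists_stab M x α i n h).choose else 0

private lemma stab_spec {α : Ordinal} {i : Fin 3} {n : ℕ} (h : ¬ P M x α i n) :
    stab M x α i n < α ∧
      ∀ τ, stab M x α i n ≤ τ → τ < α → (M.snap x τ).tape i n = false := by
  unfold stab
  rw [dif_pos h]
  exact (exists_stab M x α i n h).choose_spec

variable (α : Ordinal.{0})

/-- Levels of the countable "Skolem hull" of `{0, α}` under predecessor,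
successor, cofinality witnesses and stabilization points. -/
private noncomputable def lev : ℕ → Set Ordinal.{0}
  | 0 => {0, α}
  | (k + 1) =>
      lev k ∪ Ordinal.pred '' lev k ∪ (fun o => o + 1) '' lev k ∪
        (⋃ i : Fin 3, ⋃ n : ℕ,
          Set.image2 (fun γ σ => wit M x γ σ i n) (lev k) (lev k)) ∪
        (⋃ i : Fin 3, ⋃ n : ℕ, (fun γ => stab M x γ i n) '' lev k)

private lemma lev_countable (k : ℕ) : (lev M x α k).Countable := by
  induction k with
  | zero => exact (Set.countable_singleton α).insert 0
  | succ k ih =>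
      refine ((((ih.union (ih.image _)).union (ih.image _)).union ?_).union ?_)
      · exact Set.countable_iUnion fun i => Set.countable_iUnion fun n => ih.image2 ih _
      · exact Set.countable_iUnion fun i => Set.countable_iUnion fun n => ih.image _

private lemma lev_mono : Monotone (lev M x α) := by
  apply monotone_nat_of_le_succ
  intro k o ho
  show o ∈ _ ∪ _ ∪ _ ∪ _ ∪ _
  exact Or.inl (Or.inl (Or.inl (Or.inl ho)))

/-- The countable closed set of stages. -/
private noncomputable def Sset : Set Ordinal.{0} := ⋃ k, lev M x α k

private lemma Sset_countable : (Sset M x α).Countable :=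
  Set.countable_iUnion (lev_countable M x α)

private lemma zero_mem_S : (0 : Ordinal) ∈ Sset M x α :=
  Set.mem_iUnion.2 ⟨0, Or.inl rfl⟩

private lemma alpha_mem_S : α ∈ Sset M x α :=
  Set.mem_iUnion.2 ⟨0, Or.inr rfl⟩

private lemma pred_mem_S {γ : Ordinal} (h : γ ∈ Sset M x α) :
    Ordinal.pred γ ∈ Sset M x α := by
  obtain ⟨k, hk⟩ := Set.mem_iUnion.1 h
  exact Set.mem_iUnion.2 ⟨k + 1,
    Or.inl (Or.inl (Or.inl (Or.inr (Set.mem_image_of_mem _ hk))))⟩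

private lemma succ_mem_S {γ : Ordinal} (h : γ ∈ Sset M x α) :
    γ + 1 ∈ Sset M x α := by
  obtain ⟨k, hk⟩ := Set.mem_iUnion.1 h
  exact Set.mem_iUnion.2 ⟨k + 1,
    Or.inl (Or.inl (Or.inr (Set.mem_image_of_mem _ hk)))⟩

private lemma wit_mem_S {γ σ : Ordinal} (hγ : γ ∈ Sset M x α) (hσ : σ ∈ Sset M x α)
    (i : Fin 3) (n : ℕ) : wit M x γ σ i n ∈ Sset M x α := by
  obtain ⟨k1, hk1⟩ := Set.mem_iUnion.1 hγ
  obtain ⟨k2, hk2⟩ := Set.mem_iUnion.1 hσ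
  refine Set.mem_iUnion.2 ⟨max k1 k2 + 1, Or.inl (Or.inr ?_)⟩
  refine Set.mem_iUnion.2 ⟨i, Set.mem_iUnion.2 ⟨n, ?_⟩⟩
  exact Set.mem_image2_of_mem (lev_mono M x α (le_max_left k1 k2) hk1)
    (lev_mono M x α (le_max_right k1 k2) hk2)

private lemma stab_mem_S {γ : Ordinal} (hγ : γ ∈ Sset M x α) (i : Fin 3) (n : ℕ) :
    stab M x γ i n ∈ Sset M x α := by
  obtain ⟨k, hk⟩ := Set.mem_iUnion.1 hγ
  refine Set.mem_iUnion.2 ⟨k + 1, Or.inr ?_⟩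
  exact Set.mem_iUnion.2 ⟨i, Set.mem_iUnion.2 ⟨n, Set.mem_image_of_mem _ hk⟩⟩

private lemma wfS : WellFounded (fun b a : ↥(Sset M x α) => b.1 < a.1) :=
  InvImage.wf (fun b : ↥(Sset M x α) => b.1) Ordinal.lt_wf

/-- The transitive collapse of `Sset`. -/
private noncomputable def piC : ↥(Sset M x α) → Ordinal.{0} :=
  (wfS M x α).fix fun a ih =>
    ⨆ b : {b : ↥(Sset M x α) // b.1 < a.1}, ih b.1 b.2 + 1

private lemma piC_eq (a : ↥(Sset M x α)) :
    piC M x α a = ⨆ b : {b : ↥(Sset M x α) // b.1 < a.1}, piC M x α b.1 + 1 := by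
  unfold piC
  rw [WellFounded.fix_eq]

private lemma piC_lt {a b : ↥(Sset M x α)} (h : b.1 < a.1) :
    piC M x α b < piC M x α a := by
  haveI : Countable ↥(Sset M x α) := (Sset_countable M x α).to_subtype
  rw [piC_eq M x α a]
  have hb := le_ciSup (f := fun c : {c : ↥(Sset M x α) // c.1 < a.1} => piC M x α c.1 + 1)
    Ordinal.bddAbove_of_small ⟨b, h⟩
  refine lt_of_lt_of_le ?_ hb
  rw [Ordinal.add_one_eq_succ]
  exact Order.lt_succ _

private lemma piC_le {a b : ↥(Sset M x α)} (h : b.1 ≤ a.1) :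
    piC M x α b ≤ piC M x α a := by
  rcases h.lt_or_eq with h' | h'
  · exact (piC_lt M x α h').le
  · rw [Subtype.ext h']

private lemma piC_surj : ∀ a : ↥(Sset M x α), ∀ γ, γ < piC M x α a →
    ∃ b : ↥(Sset M x α), b.1 < a.1 ∧ piC M x α b = γ := by
  refine fun a => (wfS M x α).induction (C := fun a => ∀ γ, γ < piC M x α a →
    ∃ b : ↥(Sset M x α), b.1 < a.1 ∧ piC M x α b = γ) a ?_
  intro a ih γ hγ
  rw [piC_eq] at hγ
  have hex : ∃ b : {b : ↥(Sset M x α) // b.1 < a.1}, γ < piC M x α b.1 + 1 := by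
    by_contra hno
    push_neg at hno
    exact absurd (ciSup_le' hno) (not_le.mpr hγ)
  obtain ⟨b, hb⟩ := hex
  rw [Ordinal.add_one_eq_succ, Order.lt_succ_iff] at hb
  rcases hb.lt_or_eq with hlt | heq
  · obtain ⟨c, hc1, hc2⟩ := ih b.1 b.2 γ hlt
    exact ⟨c, hc1.trans b.2, hc2⟩
  · exact ⟨b.1, b.2, heq.symm⟩

/-- The main condensation lemma: the collapse of the hull computes the same
snapshots. -/
private lemma key : ∀ a : ↥(Sset M x α),
    M.snap x (piC M x α a) = M.snap x a.1 := by
  refine fun a => (wfS M x α).induction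
    (C := fun a => M.snap x (piC M x α a) = M.snap x a.1) a ?_
  intro a ih
  by_cases hne : ∃ b : ↥(Sset M x α), b.1 < a.1
  · by_cases hmax : ∃ m : ↥(Sset M x α), m.1 < a.1 ∧
        ∀ b : ↥(Sset M x α), b.1 < a.1 → b.1 ≤ m.1
    · -- successor case
      obtain ⟨m, hm1, hm2⟩ := hmax
      have ha : a.1 = m.1 + 1 := by
        rcases Ordinal.zero_or_succ_or_isSuccLimit a.1 with h0 | ⟨θ, hθ⟩ | hL
        · exact absurd (h0 ▸ hm1) not_lt_zero
        · replace hθ := hθ.symm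
          have hθS : θ ∈ Sset M x α := by
            have := pred_mem_S M x α a.2
            rwa [hθ, Ordinal.pred_succ] at this
          have hθlt : θ < a.1 := by rw [hθ]; exact Order.lt_succ θ
          have h1 : m.1 ≤ θ := by
            have := hm1
            rw [hθ, Order.lt_succ_iff] at this
            exact this
          have h2 : θ ≤ m.1 := hm2 ⟨θ, hθS⟩ hθlt
          rw [hθ, ← Ordinal.add_one_eq_succ, le_antisymm h1 h2]
        · exfalso
          have hsmem : m.1 + 1 ∈ Sset M x α := succ_mem_S M x α m.2
          have hslt : m.1 + 1 < a.1 := by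
            rw [Ordinal.add_one_eq_succ]; exact hL.succ_lt hm1
          have := hm2 ⟨m.1 + 1, hsmem⟩ hslt
          exact absurd this (by simp)
      have hpia : piC M x α a = piC M x α m + 1 := by
        haveI : Countable ↥(Sset M x α) := (Sset_countable M x α).to_subtype
        refine le_antisymm ?_ ?_
        · rw [piC_eq M x α a]
          exact ciSup_le' fun b => add_le_add_left (piC_le M x α (hm2 b.1 b.2)) 1
        · rw [piC_eq M x α a]
          exact le_ciSup (f := fun c : {c : ↥(Sset M x α) // c.1 < a.1} =>
            piC M x α c.1 + 1) Ordinal.bddAbove_of_small ⟨m, hm1⟩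
      rw [hpia, snap_succ, ih m hm1, ← snap_succ, ← ha]
    · -- limit case
      push_neg at hmax
      obtain ⟨b₀, hb₀⟩ := hne
      have h0a : a.1 ≠ 0 :=
        fun h => not_lt_zero (h ▸ hb₀)
      have hnsa : ¬ ∃ β, β < a.1 ∧ a.1 = β + 1 := by
        rintro ⟨θ, hθ1, hθ2⟩
        have hθS : θ ∈ Sset M x α := by
          have := pred_mem_S M x α a.2
          rwa [hθ2, Ordinal.add_one_eq_succ, Ordinal.pred_succ] at this
        obtain ⟨b, hb1, hb2⟩ := hmax ⟨θ, hθS⟩ hθ1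
        have : b.1 ≤ θ := by
          have := hb1
          rw [hθ2, Ordinal.add_one_eq_succ, Order.lt_succ_iff] at this
          exact this
        exact absurd hb2 (not_lt.mpr this)
      have h0p : piC M x α a ≠ 0 := by
        intro h
        exact not_lt_zero (h ▸ piC_lt M x α hb₀)
      have hnsp : ¬ ∃ β, β < piC M x α a ∧ piC M x α a = β + 1 := by
        rintro ⟨θ, hθ1, hθ2⟩
        obtain ⟨b, hb1, hb2⟩ := piC_surj M x α a θ hθ1
        obtain ⟨b', hb'1, hb'2⟩ := hmax b hb1
        have h1 : piC M x α b < piC M x α b' := piC_lt M x α hb'2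
        have h2 : piC M x α b' < piC M x α a := piC_lt M x α hb'1
        rw [hθ2, Ordinal.add_one_eq_succ, Order.lt_succ_iff, ← hb2] at h2
        exact absurd h2 (not_le.mpr h1)
      rw [snap_limit M x _ h0p hnsp, snap_limit M x _ h0a hnsa]
      congr 1
      funext i n
      rw [decide_eq_decide]
      constructor
      · -- cofinal below the collapse implies cofinal below `a`
        intro hp
        by_contra hB
        obtain ⟨hσlt, hσst⟩ := stab_spec M x hB
        set σ₀ : ↥(Sset M x α) := ⟨stab M x a.1 i n, stab_mem_S M x α a.2 i n⟩
        obtain ⟨γ, hγ1, hγ2, hγ3⟩ := hp (piC M x α σ₀) (piC_lt M x α hσlt)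
        obtain ⟨b, hb1, hb2⟩ := piC_surj M x α a γ hγ2
        have hσb : σ₀.1 ≤ b.1 := by
          by_contra hc
          push_neg at hc
          have := piC_lt M x α (a := σ₀) hc
          rw [hb2] at this
          exact absurd hγ1 (not_le.mpr this)
        have htb : (M.snap x b.1).tape i n = true := by
          rw [← ih b hb1, hb2]
          exact hγ3
        rw [hσst b.1 hσb hb1] at htb
        exact Bool.false_ne_true htb
      · -- cofinal below `a` implies cofinal below the collapse
        intro hp β hβ
        obtain ⟨b, hb1, hb2⟩ := piC_surj M x α a β hβ
        obtain ⟨hw1, hw2, hw3⟩ := wit_spec M x hb1 hp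
        set τ : ↥(Sset M x α) := ⟨wit M x a.1 b.1 i n, wit_mem_S M x α a.2 b.2 i n⟩
        refine ⟨piC M x α τ, ?_, piC_lt M x α hw2, ?_⟩
        · rw [← hb2]
          exact piC_le M x α hw1
        · rw [ih τ hw2]
          exact hw3
  · -- zero case
    push_neg at hne
    have ha : a.1 = 0 :=
      le_antisymm (hne ⟨0, zero_mem_S M x α⟩) zero_le
    have hpa : piC M x α a = 0 := by
      rw [piC_eq M x α a]
      haveI : IsEmpty {b : ↥(Sset M x α) // b.1 < a.1} :=
        ⟨fun b => absurd b.2 (not_lt.mpr (hne b.1))⟩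
      rw [ciSup_of_empty]
      rfl
    rw [hpa, ha]

private lemma piC_lt_omega1 (a : ↥(Sset M x α)) :
    piC M x α a < (Cardinal.aleph 1).ord := by
  haveI : Countable ↥(Sset M x α) := (Sset_countable M x α).to_subtype
  have hsurj : Function.Surjective
      (fun b : {b : ↥(Sset M x α) // b.1 < a.1} =>
        (⟨piC M x α b.1, piC_lt M x α b.2⟩ : ↥(Set.Iio (piC M x α a)))) := by
    rintro ⟨γ, hγ⟩
    obtain ⟨b, hb1, hb2⟩ := piC_surj M x α a γ hγ
    exact ⟨⟨b, hb1⟩, Subtype.ext hb2⟩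
  haveI : Countable ↥(Set.Iio (piC M x α a)) := hsurj.countable
  have h1 : Cardinal.mk ↥(Set.Iio (piC M x α a)) ≤ Cardinal.aleph0 :=
    Cardinal.mk_le_aleph0
  rw [Ordinal.mk_Iio_ordinal, ← Cardinal.lift_aleph0.{1, 0}] at h1
  have hcard : (piC M x α a).card ≤ Cardinal.aleph0 := Cardinal.lift_le.mp h1
  exact Cardinal.lt_ord.mpr (lt_of_le_of_lt hcard Cardinal.aleph0_lt_aleph_one)

end HaltingAux

/-- **Countable halting stages.** If the computation of an infinite time
Turing machine on input `x` halts, then the first ordinal stage at which the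
machine is in the halt state is less than `ω₁`. -/
theorem halting_computation_countable (M : ITTM.Machine) (x : ITTM.R) (α : Ordinal)
    (h : M.haltsAt x α) : α < (Cardinal.aleph 1).ord := by
  by_contra hlt
  push_neg at hlt
  obtain ⟨hhalt, hmin⟩ := h
  set a : ↥(Sset M x α) := ⟨α, alpha_mem_S M x α⟩ with ha
  have hk := key M x α a
  have hπlt : piC M x α a < (Cardinal.aleph 1).ord := piC_lt_omega1 M x α a
  refine hmin (piC M x α a) (lt_of_lt_of_le hπlt hlt) ?_
  show (M.snap x (piC M x α a)).state = M.halt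
  rw [hk]
  exact hhalt
end

section
/- For every program p and input x ∈ 2^ℕ, either the computation of p on x halts at a countable stage, or the computation repeats itself by a countable stage: there are countable limit ordinals δ < δ′ such that the snapshots at stages δ and δ′ are identical and no tape cell whose value is 0 in this snapshot ever has value 1 at any stage strictly between δ and δ′. -/
open scoped Classical

/-
The snapshot at stage `ω₁` is itself a limit snapshot: a cell holds `1` there iff it
is `1` cofinally often below `ω₁`. Since there are only countably many cells and `ω₁` has
uncountable cofinality, there is a countable stage `σ` after which every cell that is `0` at `ω₁`
stays `0`, and the countable limits `δ > σ` closed under "next stage at which each cofinal cell is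
`1` again" are unbounded below `ω₁`. At any such `δ` the limsup rule yields exactly the snapshot at
`ω₁`, so two of them give the repetition.
-/

open Cardinal Order

namespace ITTM

def CofinalBelow {α : Type*} [Preorder α] (δ : α) (P : α → Prop) : Prop :=
  ∀ β < δ, ∃ γ, β ≤ γ ∧ γ < δ ∧ P γ

section CofinalBelow

variable {α : Type*} [Preorder α] {δ : α} {P : α → Prop}

theorem not_cofinalBelow_iff :
    ¬ CofinalBelow δ P ↔ ∃ σ < δ, ∀ γ, σ ≤ γ → γ < δ → ¬ P γ := by
  simp [CofinalBelow]

theorem cofinalBelow_iff_of_forall_not {c σ : α} (hσδ : σ < δ) (hδc : δ ≤ c)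
    (hσ : ¬ CofinalBelow c P → ∀ γ, σ ≤ γ → γ < c → ¬ P γ)
    (hrefl : CofinalBelow c P → CofinalBelow δ P) :
    CofinalBelow δ P ↔ CofinalBelow c P := by
  refine ⟨fun hδ => ?_, hrefl⟩
  by_contra hc
  exact not_cofinalBelow_iff.2 ⟨σ, hσδ, fun γ hσγ hγδ => hσ hc γ hσγ (hγδ.trans_le hδc)⟩ hδ

end CofinalBelow

section Reflection

variable {c : Ordinal.{u}} {ι : Type u}

theorem exists_forall_not_of_lt_cof (hι : #ι < c.cof) (P : ι → Ordinal.{u} → Prop) :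
    ∃ σ < c, ∀ i, ¬ CofinalBelow c (P i) → ∀ γ, σ ≤ γ → γ < c → ¬ P i γ := by
  have hc : 0 < c := Ordinal.cof_pos.1 (pos_of_gt hι)
  have h : ∀ i, ∃ σ < c, ¬ CofinalBelow c (P i) → ∀ γ, σ ≤ γ → γ < c → ¬ P i γ := by
    intro i
    by_cases hi : CofinalBelow c (P i)
    · exact ⟨0, hc, fun h => absurd hi h⟩
    · obtain ⟨σ, hσc, hσ⟩ := not_cofinalBelow_iff.1 hi
      exact ⟨σ, hσc, fun _ => hσ⟩
  choose σ hσc hσ using h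
  exact ⟨⨆ i, σ i, Ordinal.iSup_lt_of_lt_cof hι hσc,
    fun i hi γ hγ => hσ i hi γ ((Ordinal.le_iSup σ i).trans hγ)⟩

theorem exists_gt_forall_cofinalBelow (hc : ℵ₀ < c.cof) (hι : #ι < c.cof)
    (P : ι → Ordinal.{u} → Prop) {β : Ordinal.{u}} (hβ : β < c) :
    ∃ β', β < β' ∧ β' < c ∧ ∀ i, CofinalBelow c (P i) → ∃ γ, β ≤ γ ∧ γ < β' ∧ P i γ := by
  have h : ∀ i, ∃ γ, β ≤ γ ∧ γ < c ∧ (CofinalBelow c (P i) → P i γ) := by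
    intro i
    by_cases hi : CofinalBelow c (P i)
    · obtain ⟨γ, hβγ, hγc, hγ⟩ := hi β hβ
      exact ⟨γ, hβγ, hγc, fun _ => hγ⟩
    · exact ⟨β, le_rfl, hβ, fun h => absurd h hi⟩
  choose γ hβγ hγc hγ using h
  have hsup : β ⊔ ⨆ i, γ i < c := max_lt hβ (Ordinal.iSup_lt_of_lt_cof hι hγc)
  refine ⟨succ (β ⊔ ⨆ i, γ i), (le_max_left _ _).trans_lt (lt_succ _),
    (Ordinal.one_lt_cof_iff.1 (one_lt_aleph0.trans hc)).succ_lt hsup,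
    fun i hi => ⟨γ i, hβγ i, ?_, hγ i hi⟩⟩
  exact ((Ordinal.le_iSup γ i).trans (le_max_right _ _)).trans_lt (lt_succ _)

theorem exists_isSuccLimit_closed_under (hc : ℵ₀ < c.cof)
    {R : Ordinal.{u} → Ordinal.{u} → Prop} (hR : ∀ β < c, ∃ β', β < β' ∧ β' < c ∧ R β β')
    {θ : Ordinal.{u}} (hθ : θ < c) :
    ∃ δ, θ < δ ∧ δ < c ∧ IsSuccLimit δ ∧ ∀ β < δ, ∃ α β', β ≤ α ∧ β' < δ ∧ R α β' := by
  choose! F hF hFc hRF using hR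
  have hiter : ∀ n, F^[n] θ < c := by
    intro n
    induction n with
    | zero => exact hθ
    | succ n ih => rw [Function.iterate_succ_apply']; exact hFc _ ih
  have hlt : ∀ n, F^[n] θ < F^[n + 1] θ := fun n => by
    rw [Function.iterate_succ_apply']; exact hF _ (hiter n)
  have hlt_nfp : ∀ n, F^[n] θ < Ordinal.nfp F θ := fun n =>
    (hlt n).trans_le (Ordinal.iterate_le_nfp F θ (n + 1))
  have hbelow : ∀ β < Ordinal.nfp F θ, ∃ n, β < F^[n] θ := fun β => Ordinal.lt_nfp_iff.1
  refine ⟨Ordinal.nfp F θ, hlt_nfp 0, Ordinal.nfp_lt_ord hc hFc hθ, ?_, ?_⟩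
  · refine Ordinal.isSuccLimit_iff.2 ⟨(hlt_nfp 0).ne_bot,
      isSuccPrelimit_of_succ_lt fun β hβ => ?_⟩
    obtain ⟨n, hn⟩ := hbelow β hβ
    exact (succ_le_of_lt hn).trans_lt (hlt_nfp n)
  · intro β hβ
    obtain ⟨n, hn⟩ := hbelow β hβ
    refine ⟨F^[n] θ, F^[n + 1] θ, hn.le, hlt_nfp (n + 1), ?_⟩
    rw [Function.iterate_succ_apply']
    exact hRF _ (hiter n)

theorem exists_isSuccLimit_cofinalBelow (hc : ℵ₀ < c.cof) (hι : #ι < c.cof)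
    (P : ι → Ordinal.{u} → Prop) {θ : Ordinal.{u}} (hθ : θ < c) :
    ∃ δ, θ < δ ∧ δ < c ∧ IsSuccLimit δ ∧ ∀ i, CofinalBelow c (P i) → CofinalBelow δ (P i) := by
  obtain ⟨δ, hθδ, hδc, hδ, hclosed⟩ :=
    exists_isSuccLimit_closed_under hc (fun β hβ => exists_gt_forall_cofinalBelow hc hι P hβ) hθ
  refine ⟨δ, hθδ, hδc, hδ, fun i hi β hβ => ?_⟩
  obtain ⟨α, β', hβα, hβ'δ, hαβ'⟩ := hclosed β hβ
  obtain ⟨γ, hαγ, hγβ', hγ⟩ := hαβ' i hi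
  exact ⟨γ, hβα.trans hαγ, hγβ'.trans hβ'δ, hγ⟩

end Reflection

namespace Machine

variable (M : Machine) (x : R)

theorem snap_of_isSuccLimit {δ : Ordinal} (hδ : IsSuccLimit δ) :
    M.snap x δ = ⟨M.limit, 0, fun i n =>
      decide (CofinalBelow δ fun γ => (M.snap x γ).tape i n = true)⟩ := by
  have hsucc : ¬ ∃ β, β < δ ∧ δ = β + 1 := by
    rintro ⟨β, hβ, rfl⟩
    exact hδ.succ_lt hβ |>.ne (succ_eq_add_one β)
  rw [snap, WellFounded.fix_eq, dif_neg hδ.pos.ne', dif_neg hsucc]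
  simp only [CofinalBelow, exists_prop]
  rfl

theorem snap_eq_snap_of_cofinalBelow_iff {δ δ' : Ordinal} (hδ : IsSuccLimit δ)
    (hδ' : IsSuccLimit δ')
    (h : ∀ i n, CofinalBelow δ (fun γ => (M.snap x γ).tape i n = true) ↔
      CofinalBelow δ' (fun γ => (M.snap x γ).tape i n = true)) :
    M.snap x δ = M.snap x δ' := by
  rw [M.snap_of_isSuccLimit x hδ, M.snap_of_isSuccLimit x hδ']
  congr 1
  funext i n
  exact decide_eq_decide.2 (h i n)

theorem exists_stable_snap_of_aleph0_lt_cof {c : Ordinal} (hc : ℵ₀ < c.cof) :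
    ∃ σ < c, (∀ i n, (M.snap x c).tape i n = false →
        ∀ γ, σ ≤ γ → γ < c → (M.snap x γ).tape i n = false) ∧
      ∀ θ, σ ≤ θ → θ < c → ∃ δ, θ < δ ∧ δ < c ∧ IsSuccLimit δ ∧ M.snap x δ = M.snap x c := by
  have hclim : IsSuccLimit c := Ordinal.one_lt_cof_iff.1 (one_lt_aleph0.trans hc)
  have hcells : #(Fin 3 × ℕ) < c.cof := by simpa using hc
  let P : Fin 3 × ℕ → Ordinal → Prop := fun j γ => (M.snap x γ).tape j.1 j.2 = true
  obtain ⟨σ, hσc, hσ⟩ := exists_forall_not_of_lt_cof hcells P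
  refine ⟨σ, hσc, fun i n h γ hσγ hγc => ?_, fun θ hσθ hθc => ?_⟩
  · rw [M.snap_of_isSuccLimit x hclim, decide_eq_false_iff_not] at h
    simpa [P] using hσ (i, n) h γ hσγ hγc
  · obtain ⟨δ, hθδ, hδc, hδ, hrefl⟩ := exists_isSuccLimit_cofinalBelow hc hcells P hθc
    refine ⟨δ, hθδ, hδc, hδ, M.snap_eq_snap_of_cofinalBelow_iff x hδ hclim fun i n => ?_⟩
    exact cofinalBelow_iff_of_forall_not (hσθ.trans_lt hθδ) hδc.le (hσ (i, n)) (hrefl (i, n))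

end Machine

end ITTM

/-- **Halt or repeat in countably many steps.** Every infinite time
computation either halts at a countable stage, or repeats itself by a
countable stage: there are countable limit ordinals `δ < δ'` with identical
snapshots such that no cell which is `0` in this snapshot ever has value `1`
strictly between stages `δ` and `δ'`. -/
theorem halts_or_repeats (M : ITTM.Machine) (x : ITTM.R) :
    (∃ α < (Cardinal.aleph 1).ord, M.haltsAt x α) ∨
    (∃ δ δ' : Ordinal, δ < δ' ∧ δ' < (Cardinal.aleph 1).ord ∧
      Order.IsSuccLimit δ ∧ Order.IsSuccLimit δ' ∧ M.snap x δ = M.snap x δ' ∧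
      ∀ (i : Fin 3) (n : ℕ), (M.snap x δ).tape i n = false →
        ∀ β : Ordinal, δ < β → β < δ' → (M.snap x β).tape i n = false) := by
  -- `snap` keeps running past the halt state, so the computation repeats whether or not it halts.
  refine Or.inr ?_
  have hcof : ℵ₀ < (aleph 1).ord.cof := by
    rw [isRegular_aleph_one.cof_ord]
    exact aleph0_lt_aleph_one
  obtain ⟨σ, hσ, hzero, hrecur⟩ := M.exists_stable_snap_of_aleph0_lt_cof x hcof
  obtain ⟨δ, hσδ, hδ, hδlim, hδsnap⟩ := hrecur σ le_rfl hσ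
  obtain ⟨δ', hδδ', hδ', hδ'lim, hδ'snap⟩ := hrecur δ hσδ.le hδ
  refine ⟨δ, δ', hδδ', hδ', hδlim, hδ'lim, hδsnap.trans hδ'snap.symm,
    fun i n h β hδβ hβδ' => ?_⟩
  rw [hδsnap] at h
  exact hzero i n h β (hσδ.trans hδβ).le (hβδ'.trans hδ')
end
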